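/- Let g: ℂ → ℝ be a nonnegative function with g(z) → ∞ as |z| → ∞. Let (α_n) be a sequence of algebraic numbers and μ_n the uniform probability measure on the set of conjugates of α_n. If the heights h_g(α_n) := (1/deg α_n)(log|b_n| + ∑_{x ∈ Conj(α_n)} g(x)) are bounded above and the leading coefficients satisfy |b_n| ≥ 1, then the family (μ_n) is tight: for every ε > 0 there is a compact K ⊂ ℂ with μ_n(ℂ \ K) < ε for all n. -/

import Mathlib

/-! Since `|b_n| ≥ 1`, the height bounds the mean of `g` against `μ_n`, so
`∫ g dμ_n ≤ B` uniformly. As `g ≥ M` off a large ball, Markov's inequality gives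
`μ_n(ℂ \ ball) ≤ B / M` for every `n`, which is small for large `M`. -/

open Polynomial MeasureTheory

noncomputable def heightWrt (g : ℂ → ℝ) (P : Polynomial ℤ) : ℝ :=
  (1 / (P.natDegree : ℝ)) *
    (Real.log |(P.leadingCoeff : ℝ)| + (((P.map (Int.castRingHom ℂ)).roots.map g).sum))

noncomputable def conjMeasure (P : Polynomial ℤ) : Measure ℂ :=
  ((P.natDegree : ENNReal))⁻¹ •
    (((P.map (Int.castRingHom ℂ)).roots.map (fun x => Measure.dirac x)).sum)

open scoped ENNReal

theorem ENNReal.ofReal_multiset_sum_of_nonneg {s : Multiset ℝ} (hs : ∀ x ∈ s, 0 ≤ x) :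
    ENNReal.ofReal s.sum = (s.map ENNReal.ofReal).sum := by
  induction s using Multiset.induction with
  | empty => simp
  | cons a s ih =>
    rw [Multiset.forall_mem_cons] at hs
    rw [Multiset.sum_cons, Multiset.map_cons, Multiset.sum_cons,
      ENNReal.ofReal_add hs.1 (Multiset.sum_nonneg hs.2), ih hs.2]

theorem MeasureTheory.lintegral_multiset_sum_dirac {α : Type*} [MeasurableSpace α]
    [MeasurableSingletonClass α] (s : Multiset α) (f : α → ℝ≥0∞) :
    ∫⁻ x, f x ∂(s.map Measure.dirac).sum = (s.map f).sum := by
  induction s using Multiset.induction with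
  | empty => simp
  | cons a s ih => simp [lintegral_add_measure, ih]

/-- Markov's inequality; unlike `mul_meas_ge_le_lintegral₀` it needs no measurability of `g`. -/
theorem MeasureTheory.ofReal_mul_measure_le_lintegral {α : Type*} [MeasurableSpace α]
    (μ : Measure α) {s : Set α} (hs : MeasurableSet s) {g : α → ℝ} {M : ℝ}
    (hM : ∀ x ∈ s, M ≤ g x) :
    ENNReal.ofReal M * μ s ≤ ∫⁻ x, ENNReal.ofReal (g x) ∂μ :=
  calc ENNReal.ofReal M * μ s = ∫⁻ _ in s, ENNReal.ofReal M ∂μ := (setLIntegral_const _ _).symm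
    _ ≤ ∫⁻ x in s, ENNReal.ofReal (g x) ∂μ :=
      setLIntegral_mono' hs fun x hx => ENNReal.ofReal_le_ofReal (hM x hx)
    _ ≤ ∫⁻ x, ENNReal.ofReal (g x) ∂μ := setLIntegral_le_lintegral _ _

theorem MeasureTheory.exists_isCompact_measure_compl_lt_of_lintegral_le {ι E : Type*}
    [SeminormedAddCommGroup E] [ProperSpace E] [MeasurableSpace E] [OpensMeasurableSpace E]
    {μ : ι → Measure E} {g : E → ℝ} (hg : ∀ M : ℝ, ∃ R : ℝ, ∀ z : E, R ≤ ‖z‖ → M ≤ g z)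
    {B : ℝ} (hμ : ∀ i, ∫⁻ x, ENNReal.ofReal (g x) ∂μ i ≤ ENNReal.ofReal B)
    {ε : ℝ} (hε : 0 < ε) :
    ∃ K : Set E, IsCompact K ∧ ∀ i, μ i Kᶜ < ENNReal.ofReal ε := by
  set M := (|B| + 1) / ε
  obtain ⟨R, hR⟩ := hg M
  refine ⟨Metric.closedBall 0 R, isCompact_closedBall 0 R, fun i => ?_⟩
  have hB : ENNReal.ofReal B < ENNReal.ofReal M * ENNReal.ofReal ε := by
    rw [← ENNReal.ofReal_mul (by positivity), div_mul_cancel₀ _ hε.ne',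
      ENNReal.ofReal_lt_ofReal_iff (by positivity)]
    linarith [le_abs_self B]
  refine lt_of_mul_lt_mul_left' (a := ENNReal.ofReal M) (lt_of_le_of_lt ?_ hB)
  refine (ofReal_mul_measure_le_lintegral _ Metric.isClosed_closedBall.measurableSet.compl
    fun z hz => hR z ?_).trans (hμ i)
  exact (by simpa using hz : R < ‖z‖).le

theorem lintegral_conjMeasure (P : ℤ[X]) (f : ℂ → ℝ≥0∞) :
    ∫⁻ x, f x ∂conjMeasure P =
      (P.natDegree : ℝ≥0∞)⁻¹ * ((P.map (Int.castRingHom ℂ)).roots.map f).sum := by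
  rw [conjMeasure, lintegral_smul_measure, lintegral_multiset_sum_dirac, smul_eq_mul]

theorem lintegral_conjMeasure_le_heightWrt {g : ℂ → ℝ} (hg : ∀ z, 0 ≤ g z) {P : ℤ[X]}
    (hlead : 1 ≤ |P.leadingCoeff|) :
    ∫⁻ x, ENNReal.ofReal (g x) ∂conjMeasure P ≤ ENNReal.ofReal (heightWrt g P) := by
  rw [lintegral_conjMeasure]
  set s := (P.map (Int.castRingHom ℂ)).roots
  -- For constant `P` the factor `(0 : ℝ≥0∞)⁻¹ = ∞` is harmless: there are no roots.
  rcases P.natDegree.eq_zero_or_pos with hd | hd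
  · have hs : s = 0 := Multiset.card_eq_zero.mp <| Nat.eq_zero_of_le_zero <|
      (card_roots' _).trans <| (natDegree_map_le).trans hd.le
    simp [hs]
  have hlog : 0 ≤ Real.log |(P.leadingCoeff : ℝ)| :=
    Real.log_nonneg (by exact_mod_cast hlead)
  calc (P.natDegree : ℝ≥0∞)⁻¹ * (s.map fun x => ENNReal.ofReal (g x)).sum
      = ENNReal.ofReal (1 / P.natDegree * (s.map g).sum) := by
        rw [ENNReal.ofReal_mul (by positivity), one_div, ENNReal.ofReal_inv_of_pos (by positivity),
          ENNReal.ofReal_natCast, ENNReal.ofReal_multiset_sum_of_nonneg, Multiset.map_map]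
        · rfl
        · simpa using fun x _ => hg x
    _ ≤ ENNReal.ofReal (heightWrt g P) := by
        unfold heightWrt
        gcongr
        exact le_add_of_nonneg_left hlog

theorem conjMeasures_tight_general (g : ℂ → ℝ) (hg0 : ∀ z, 0 ≤ g z)
    (hginf : ∀ M : ℝ, ∃ R : ℝ, ∀ z : ℂ, R ≤ ‖z‖ → M ≤ g z)
    (P : ℕ → Polynomial ℤ)
    (hlead : ∀ n, 1 ≤ |(P n).leadingCoeff|)
    (hbdd : ∃ B : ℝ, ∀ n, heightWrt g (P n) ≤ B) :
    ∀ ε : ℝ, 0 < ε → ∃ K : Set ℂ, IsCompact K ∧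
      ∀ n, conjMeasure (P n) Kᶜ < ENNReal.ofReal ε := by
  obtain ⟨B, hB⟩ := hbdd
  exact fun ε hε => exists_isCompact_measure_compl_lt_of_lintegral_le hginf
    (fun n => (lintegral_conjMeasure_le_heightWrt hg0 (hlead n)).trans
      (ENNReal.ofReal_le_ofReal (hB n))) hε

/-- If `g ≥ 0` with `g(z) → ∞` as `|z| → ∞`, the heights `h_g(α_n)` are bounded above
and the leading coefficients satisfy `|b_n| ≥ 1`, then the family of uniform measures on
conjugates is tight. -/
theorem conjMeasures_tight (g : ℂ → ℝ) (hg0 : ∀ z, 0 ≤ g z)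
    (hginf : ∀ M : ℝ, ∃ R : ℝ, ∀ z : ℂ, R ≤ ‖z‖ → M ≤ g z)
    (P : ℕ → Polynomial ℤ) (hirr : ∀ n, Irreducible (P n))
    (hdeg : ∀ n, 0 < (P n).natDegree)
    (hlead : ∀ n, 1 ≤ |(P n).leadingCoeff|)
    (hbdd : ∃ B : ℝ, ∀ n, heightWrt g (P n) ≤ B) :
    ∀ ε : ℝ, 0 < ε → ∃ K : Set ℂ, IsCompact K ∧
      ∀ n, conjMeasure (P n) Kᶜ < ENNReal.ofReal ε :=
  conjMeasures_tight_general g hg0 hginf P hlead hbdd
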